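/- Let q ≥ 5 be an odd prime power and M_1 the incidence matrix of the strongly regular generalized partial geometry (P_1,C_1) from conics in PG(2,q). Then rank_2(M_1) = (q-1)^2, i.e., M_1 is invertible over F_2. -/

import Mathlib

/-!
In odd characteristic, `(1, x, y)` lies on the conic with parameters `(a, b)` iff
`a x + b y + x y = 0`. Counting common conics of two points modulo 2 gives `M Mᵀ = 1 + K`
over `𝔽₂`, where `K = J + R + C + L` is the sum of the all-ones matrix and the matrices of the
relations "same `x`", "same `y`" and "same `x / y`". A fibre of one of these relations meets a
fibre of another in exactly one point, so the mixed products of `R, C, L` all equal `J`, while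
every other product vanishes because a fixed-point-free involution `(x, y) ↦ (±x, ±y)`
preserves both factors. Hence `K² = 6 J = 0`, `(M Mᵀ)² = 1`, and `M` is invertible.
-/

open Matrix

/-- (1,x,y) lies on the conic through e₁,e₂,e₃ with matrix !![0,a,b;a,0,1;b,1,0]. -/
abbrev onConic (F : Type) [Field F] (a b : F) (P : F × F) : Prop :=
  ![1, P.1, P.2] ⬝ᵥ (!![0, a, b; a, 0, 1; b, 1, 0] *ᵥ ![1, P.1, P.2]) = 0

open Finset Function

section FiberMatrix

variable {X Y Z R : Type*}

def FibersMeetUniquely (f : X → Y) (g : X → Z) : Prop :=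
  ∀ P Q, ∃! S, f S = f P ∧ g S = g Q

lemma FibersMeetUniquely.symm {f : X → Y} {g : X → Z} (h : FibersMeetUniquely f g) :
    FibersMeetUniquely g f := fun P Q => by
  simpa only [and_comm] using h Q P

variable [Fintype X] [DecidableEq Y] [DecidableEq Z]

def fiberMatrix [Zero R] [One R] (f : X → Y) : Matrix X X R :=
  of fun P Q => if f P = f Q then 1 else 0

lemma fiberMatrix_mul_fiberMatrix_apply [NonAssocSemiring R] (f : X → Y) (g : X → Z) (P Q : X) :
    (fiberMatrix f * fiberMatrix g : Matrix X X R) P Q = #{S | f P = f S ∧ g S = g Q} := by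
  simp only [fiberMatrix, mul_apply, of_apply, ite_zero_mul_ite_zero, mul_one, sum_boole]

lemma fiberMatrix_mul_fiberMatrix_of_fibersMeetUniquely [NonAssocSemiring R] {f : X → Y}
    {g : X → Z} (h : FibersMeetUniquely f g) :
    (fiberMatrix f * fiberMatrix g : Matrix X X R) = fiberMatrix fun _ => () := by
  ext P Q
  obtain ⟨S, hS, huniq⟩ := h P Q
  rw [fiberMatrix_mul_fiberMatrix_apply, card_eq_one.mpr ⟨S, ?_⟩]
  · simp [fiberMatrix]
  · ext T
    simp only [mem_filter, mem_univ, true_and, mem_singleton, eq_comm (a := f P)]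
    exact ⟨huniq T, fun hT => hT ▸ hS⟩

lemma fiberMatrix_mul_fiberMatrix_of_involutive [Ring R] [CharP R 2] {f : X → Y} {g : X → Z}
    {σ : X → X} (hσ : Involutive σ) (hfix : ∀ S, σ S ≠ S) (hf : ∀ S, f (σ S) = f S)
    (hg : ∀ S, g (σ S) = g S) :
    (fiberMatrix f * fiberMatrix g : Matrix X X R) = 0 := by
  ext P Q
  rw [mul_apply, Matrix.zero_apply]
  refine sum_ninvolution σ (fun S => ?_) (fun S _ => hfix S) (fun _ => mem_univ _) hσ
  simp only [fiberMatrix, of_apply, hf, hg, CharTwo.add_self_eq_zero]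

end FiberMatrix

abbrev NonzeroPairs (F : Type*) [Field F] := {p : F × F // p.1 ≠ 0 ∧ p.2 ≠ 0}

lemma neg_ne_self_of_ne_zero {F : Type*} [Field F] (h2 : (2 : F) ≠ 0) {x : F} (hx : x ≠ 0) :
    -x ≠ x := fun h =>
  hx <| (mul_eq_zero.mp (by linear_combination -h : (2 : F) * x = 0)).resolve_left h2

namespace NonzeroPairs

variable {F : Type*} [Field F]

def negFst (P : NonzeroPairs F) : NonzeroPairs F := ⟨(-P.1.1, P.1.2), neg_ne_zero.2 P.2.1, P.2.2⟩

def negSnd (P : NonzeroPairs F) : NonzeroPairs F := ⟨(P.1.1, -P.1.2), P.2.1, neg_ne_zero.2 P.2.2⟩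

def neg (P : NonzeroPairs F) : NonzeroPairs F :=
  ⟨(-P.1.1, -P.1.2), neg_ne_zero.2 P.2.1, neg_ne_zero.2 P.2.2⟩

lemma negFst_involutive : Involutive (negFst (F := F)) := fun P => by simp [negFst]
lemma negSnd_involutive : Involutive (negSnd (F := F)) := fun P => by simp [negSnd]
lemma neg_involutive : Involutive (neg (F := F)) := fun P => by simp [neg]

lemma negFst_ne (h2 : (2 : F) ≠ 0) (P : NonzeroPairs F) : negFst P ≠ P := fun h =>
  neg_ne_self_of_ne_zero h2 P.2.1 congr($h.1.1)
lemma negSnd_ne (h2 : (2 : F) ≠ 0) (P : NonzeroPairs F) : negSnd P ≠ P := fun h =>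
  neg_ne_self_of_ne_zero h2 P.2.2 congr($h.1.2)
lemma neg_ne (h2 : (2 : F) ≠ 0) (P : NonzeroPairs F) : neg P ≠ P := fun h =>
  neg_ne_self_of_ne_zero h2 P.2.1 congr($h.1.1)

lemma fibersMeetUniquely_fst_snd :
    FibersMeetUniquely (fun P : NonzeroPairs F => P.1.1) (fun P : NonzeroPairs F => P.1.2) :=
  fun P Q => ⟨⟨(P.1.1, Q.1.2), P.2.1, Q.2.2⟩, ⟨rfl, rfl⟩,
    fun _ ⟨h₁, h₂⟩ => Subtype.ext (Prod.ext h₁ h₂)⟩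

lemma fibersMeetUniquely_fst_ratio :
    FibersMeetUniquely (fun P : NonzeroPairs F => P.1.1)
      (fun P : NonzeroPairs F => P.1.1 / P.1.2) := by
  rintro ⟨⟨x₁, y₁⟩, hx₁, hy₁⟩ ⟨⟨x₂, y₂⟩, hx₂, hy₂⟩
  refine ⟨⟨(x₁, x₁ * y₂ / x₂), hx₁, by simp [*]⟩, ⟨rfl, by field_simp⟩,
    fun ⟨⟨x, y⟩, hx, hy⟩ ⟨h₁, h₂⟩ => Subtype.ext (Prod.ext h₁ ?_)⟩
  dsimp only at *
  subst h₁
  field_simp at h₂ ⊢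
  linear_combination -h₂

lemma fibersMeetUniquely_snd_ratio :
    FibersMeetUniquely (fun P : NonzeroPairs F => P.1.2)
      (fun P : NonzeroPairs F => P.1.1 / P.1.2) := by
  rintro ⟨⟨x₁, y₁⟩, hx₁, hy₁⟩ ⟨⟨x₂, y₂⟩, hx₂, hy₂⟩
  refine ⟨⟨(y₁ * x₂ / y₂, y₁), by simp [*], hy₁⟩, ⟨rfl, by field_simp⟩,
    fun ⟨⟨x, y⟩, hx, hy⟩ ⟨h₁, h₂⟩ => Subtype.ext (Prod.ext ?_ h₁)⟩
  dsimp only at *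
  subst h₁
  field_simp at h₂ ⊢
  linear_combination h₂

end NonzeroPairs

section ConicEquation

variable {F : Type} [Field F]

lemma onConic_iff (h2 : (2 : F) ≠ 0) (a b : F) (P : F × F) :
    onConic F a b P ↔ a * P.1 + b * P.2 + P.1 * P.2 = 0 := by
  have : ![1, P.1, P.2] ⬝ᵥ (!![0, a, b; a, 0, 1; b, 1, 0] *ᵥ ![1, P.1, P.2])
      = 2 * (a * P.1 + b * P.2 + P.1 * P.2) := by
    simp [mulVec, dotProduct, Fin.sum_univ_three]
    ring
  rw [onConic, this, mul_eq_zero, or_iff_right h2]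

lemma common_conic_iff {x₁ y₁ x₂ y₂ : F} (hD : x₁ * y₂ - x₂ * y₁ ≠ 0) (p : F × F) :
    (p.1 * x₁ + p.2 * y₁ + x₁ * y₁ = 0 ∧ p.1 * x₂ + p.2 * y₂ + x₂ * y₂ = 0) ↔
      p = (y₁ * y₂ * (x₂ - x₁) / (x₁ * y₂ - x₂ * y₁),
        x₁ * x₂ * (y₁ - y₂) / (x₁ * y₂ - x₂ * y₁)) := by
  rw [Prod.ext_iff, eq_div_iff hD, eq_div_iff hD]
  constructor
  · rintro ⟨e₁, e₂⟩
    exact ⟨by linear_combination y₂ * e₁ - y₁ * e₂, by linear_combination x₁ * e₂ - x₂ * e₁⟩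
  · rintro ⟨ha, hb⟩
    constructor <;> apply mul_left_cancel₀ hD
    · linear_combination x₁ * ha + y₁ * hb
    · linear_combination x₂ * ha + y₂ * hb

lemma not_common_conic {x₁ y₁ x₂ y₂ a b : F} (hy₁ : y₁ ≠ 0) (hy₂ : y₂ ≠ 0)
    (hD : x₁ * y₂ = x₂ * y₁) (hx : x₁ ≠ x₂) :
    ¬(a * x₁ + b * y₁ + x₁ * y₁ = 0 ∧ a * x₂ + b * y₂ + x₂ * y₂ = 0) := by
  rintro ⟨e₁, e₂⟩
  have : y₁ * y₂ * (x₁ - x₂) = 0 := by linear_combination y₂ * e₁ - y₁ * e₂ - a * hD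
  simp [hy₁, hy₂, sub_eq_zero, hx] at this

lemma two_ne_zero_of_odd_card [Fintype F] (hodd : Odd (Fintype.card F)) : (2 : F) ≠ 0 :=
  Ring.two_ne_zero fun h => by
    have := FiniteField.even_card_iff_char_two.mp h
    rw [Nat.odd_iff] at hodd
    omega

end ConicEquation

lemma card_filter_val_eq {α : Type*} [DecidableEq α] {p : α → Prop} [Fintype {a // p a}]
    [DecidablePred p] (v : α) : #{s : {a // p a} | s.1 = v} = if p v then 1 else 0 := by
  split_ifs with h
  · exact card_eq_one.2 ⟨⟨v, h⟩, by ext; simp [Subtype.ext_iff]⟩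
  · exact card_eq_zero.2 (filter_eq_empty_iff.2 fun s _ hs => h (hs ▸ s.2))

section Conics

variable {F : Type} [Field F] [Fintype F] [DecidableEq F]

lemma card_conics_through (P : NonzeroPairs F) :
    #{ab : NonzeroPairs F | ab.1.1 * P.1.1 + ab.1.2 * P.1.2 + P.1.1 * P.1.2 = 0}
      = Fintype.card F - 2 := by
  obtain ⟨⟨x, y⟩, hx, hy⟩ := P
  dsimp only at hx hy ⊢
  have hy' : -y ≠ 0 := neg_ne_zero.2 hy
  have card_values : #((univ.erase (0 : F)).erase (-y)) = Fintype.card F - 2 := by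
    rw [card_erase_of_mem (by simp [hy']), card_erase_of_mem (mem_univ _), card_univ]
    omega
  rw [← card_values]
  refine card_bij (fun ab _ => ab.1.1) (fun ⟨⟨a, b⟩, ha, hb⟩ h => ?_) ?_ (fun a h => ?_)
  · simp only [mem_filter, mem_univ, true_and] at h
    simp only [mem_erase, mem_univ, and_true, ne_eq]
    refine ⟨fun hay => hb ?_, ha⟩
    have : b * y = 0 := by linear_combination h - x * hay
    exact (mul_eq_zero.mp this).resolve_right hy
  · rintro ⟨⟨a₁, b₁⟩, _⟩ h₁ ⟨⟨a₂, b₂⟩, _⟩ h₂ (ha : a₁ = a₂)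
    simp only [mem_filter, mem_univ, true_and] at h₁ h₂
    subst ha
    have : b₁ * y = b₂ * y := by linear_combination h₁ - h₂
    simp [mul_right_cancel₀ hy this]
  · simp only [mem_erase, mem_univ, and_true, ne_eq] at h
    have hb : -(x * (a + y)) / y ≠ 0 := by
      simp [hx, hy, add_eq_zero_iff_eq_neg, h.1]
    refine ⟨⟨(a, -(x * (a + y)) / y), h.2, hb⟩, ?_, rfl⟩
    simp only [mem_filter, mem_univ, true_and]
    field_simp
    ring

variable (F) in
def conicIncidence : Matrix (NonzeroPairs F) (NonzeroPairs F) (ZMod 2) :=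
  of fun P ab => if onConic F ab.1.1 ab.1.2 P.1 then 1 else 0

variable (F) in
def conicGramDefect : Matrix (NonzeroPairs F) (NonzeroPairs F) (ZMod 2) :=
  fiberMatrix (fun _ => ()) + fiberMatrix (fun P : NonzeroPairs F => P.1.1) +
    fiberMatrix (fun P : NonzeroPairs F => P.1.2) +
    fiberMatrix (fun P : NonzeroPairs F => P.1.1 / P.1.2)

lemma conicIncidence_mul_transpose (hodd : Odd (Fintype.card F)) :
    conicIncidence F * (conicIncidence F)ᵀ = 1 + conicGramDefect F := by
  have h2 := two_ne_zero_of_odd_card hodd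
  ext ⟨⟨x₁, y₁⟩, hx₁, hy₁⟩ ⟨⟨x₂, y₂⟩, hx₂, hy₂⟩
  dsimp only at hx₁ hy₁ hx₂ hy₂
  simp only [conicIncidence, conicGramDefect, fiberMatrix, mul_apply, transpose_apply, of_apply,
    ite_zero_mul_ite_zero, mul_one, sum_boole, onConic_iff h2, Matrix.add_apply, one_apply,
    if_true, Subtype.mk.injEq, Prod.mk.injEq, div_eq_div_iff hy₁ hy₂]
  by_cases hP : x₁ = x₂ ∧ y₁ = y₂
  · obtain ⟨rfl, rfl⟩ := hP
    have hcard := card_conics_through (F := F) ⟨(x₁, y₁), hx₁, hy₁⟩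
    have hq : 2 ≤ Fintype.card F := Fintype.one_lt_card
    dsimp only at hcard
    simp only [and_self, if_true, hcard,
      (ZMod.natCast_eq_one_iff_odd).2 (Nat.Odd.sub_even hq hodd even_two)]
    decide
  by_cases hD : x₁ * y₂ = x₂ * y₁
  · have hx : x₁ ≠ x₂ := fun hx => hP ⟨hx, by subst hx; exact (mul_left_cancel₀ hx₁ hD).symm⟩
    have hy : y₁ ≠ y₂ := fun hy => hx (by subst hy; exact mul_right_cancel₀ hy₁ hD)
    rw [card_eq_zero.2 (filter_eq_empty_iff.2 fun ab _ => not_common_conic hy₁ hy₂ hD hx),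
      if_neg hP, if_neg hx, if_neg hy, if_pos hD]
    decide
  · rw [filter_congr fun ab _ => common_conic_iff (sub_ne_zero.2 hD) ab.1, card_filter_val_eq]
    simp only [if_neg hP, if_neg hD]
    rcases eq_or_ne x₁ x₂ with hx | hx <;> rcases eq_or_ne y₁ y₂ with hy | hy
    · exact absurd ⟨hx, hy⟩ hP
    all_goals simp [hx, hy, hx₁, hx₂, hy₁, hy₂, sub_ne_zero.2 hD, sub_eq_zero, eq_comm (a := x₂),
      show (1 + 1 : ZMod 2) = 0 from rfl]

open NonzeroPairs in
lemma conicGramDefect_mul_self (h2 : (2 : F) ≠ 0) :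
    conicGramDefect F * conicGramDefect F = 0 := by
  set J : Matrix (NonzeroPairs F) (NonzeroPairs F) (ZMod 2) := fiberMatrix fun _ => ()
  set R : Matrix (NonzeroPairs F) (NonzeroPairs F) (ZMod 2) := fiberMatrix fun P => P.1.1
  set C : Matrix (NonzeroPairs F) (NonzeroPairs F) (ZMod 2) := fiberMatrix fun P => P.1.2
  set L : Matrix (NonzeroPairs F) (NonzeroPairs F) (ZMod 2) := fiberMatrix fun P => P.1.1 / P.1.2
  obtain ⟨hJJ, hJR, hRJ, hRR⟩ : J * J = 0 ∧ J * R = 0 ∧ R * J = 0 ∧ R * R = 0 := by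
    refine ⟨?_, ?_, ?_, ?_⟩ <;>
      exact fiberMatrix_mul_fiberMatrix_of_involutive negSnd_involutive (negSnd_ne h2)
        (fun _ => rfl) (fun _ => rfl)
  obtain ⟨hJC, hCJ, hCC⟩ : J * C = 0 ∧ C * J = 0 ∧ C * C = 0 := by
    refine ⟨?_, ?_, ?_⟩ <;>
      exact fiberMatrix_mul_fiberMatrix_of_involutive negFst_involutive (negFst_ne h2)
        (fun _ => rfl) (fun _ => rfl)
  obtain ⟨hJL, hLJ, hLL⟩ : J * L = 0 ∧ L * J = 0 ∧ L * L = 0 := by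
    refine ⟨?_, ?_, ?_⟩ <;>
      exact fiberMatrix_mul_fiberMatrix_of_involutive neg_involutive (neg_ne h2)
        (fun _ => by simp [NonzeroPairs.neg]) (fun _ => by simp [NonzeroPairs.neg])
  obtain ⟨hRC, hCR, hRL, hLR, hCL, hLC⟩ :
      R * C = J ∧ C * R = J ∧ R * L = J ∧ L * R = J ∧ C * L = J ∧ L * C = J :=
    ⟨fiberMatrix_mul_fiberMatrix_of_fibersMeetUniquely fibersMeetUniquely_fst_snd,
      fiberMatrix_mul_fiberMatrix_of_fibersMeetUniquely fibersMeetUniquely_fst_snd.symm,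
      fiberMatrix_mul_fiberMatrix_of_fibersMeetUniquely fibersMeetUniquely_fst_ratio,
      fiberMatrix_mul_fiberMatrix_of_fibersMeetUniquely fibersMeetUniquely_fst_ratio.symm,
      fiberMatrix_mul_fiberMatrix_of_fibersMeetUniquely fibersMeetUniquely_snd_ratio,
      fiberMatrix_mul_fiberMatrix_of_fibersMeetUniquely fibersMeetUniquely_snd_ratio.symm⟩
  change (J + R + C + L) * (J + R + C + L) = 0
  simp only [add_mul, mul_add, hJJ, hJR, hRJ, hRR, hJC, hCJ, hCC, hJL, hLJ, hLL,
    hRC, hCR, hRL, hLR, hCL, hLC, add_zero, zero_add, ZModModule.add_self]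

lemma isUnit_conicIncidence (hodd : Odd (Fintype.card F)) : IsUnit (conicIncidence F) := by
  have hsq : (1 + conicGramDefect F) * (1 + conicGramDefect F) = 1 := by
    simp only [add_mul, mul_add, one_mul, mul_one, add_assoc, ZModModule.add_self,
      conicGramDefect_mul_self (two_ne_zero_of_odd_card hodd), add_zero]
  refine (isUnit_iff_isUnit_det _).2
    (isUnit_det_of_right_inverse (B := (conicIncidence F)ᵀ * (1 + conicGramDefect F)) ?_)
  rw [← Matrix.mul_assoc, conicIncidence_mul_transpose hodd, hsq]

variable (F) in
lemma card_nonzeroPairs : Fintype.card (NonzeroPairs F) = (Fintype.card F - 1) ^ 2 := by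
  rw [Fintype.card_congr (Equiv.subtypeProdEquivProd (p := (· ≠ (0 : F))) (q := (· ≠ (0 : F)))),
    Fintype.card_prod, Fintype.card_subtype_compl, Fintype.card_subtype_eq, sq]

end Conics

theorem stmt_17_general (F : Type) [Field F] [Fintype F] [DecidableEq F] (q : ℕ)
    (hq : Fintype.card F = q) (hodd : Odd q) :
    (Matrix.of (fun (P : {p : F × F // p.1 ≠ 0 ∧ p.2 ≠ 0})
        (ab : {p : F × F // p.1 ≠ 0 ∧ p.2 ≠ 0}) =>
      if onConic F ab.1.1 ab.1.2 P.1 then (1 : ZMod 2) else 0)).rank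
      = (q - 1) ^ 2 := by
  subst hq
  exact (rank_of_isUnit (conicIncidence F) (isUnit_conicIncidence hodd)).trans
    (card_nonzeroPairs F)

/-- The 2-rank of the incidence matrix M₁ of the strongly regular generalized partial
geometry (𝒫₁,𝒞₁) from conics in PG(2,q) is (q-1)², i.e. M₁ is invertible over F₂. -/
theorem stmt_17 (F : Type) [Field F] [Fintype F] [DecidableEq F] (q : ℕ)
    (hq : Fintype.card F = q) (hodd : Odd q) (hq5 : 5 ≤ q) :
    (Matrix.of (fun (P : {p : F × F // p.1 ≠ 0 ∧ p.2 ≠ 0})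
        (ab : {p : F × F // p.1 ≠ 0 ∧ p.2 ≠ 0}) =>
      if onConic F ab.1.1 ab.1.2 P.1 then (1 : ZMod 2) else 0)).rank
      = (q - 1) ^ 2 :=
  stmt_17_general F q hq hodd
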